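/- Let 0 < ε ≤ 1/2, let X ∈ ℝ^{n×d}, Y ∈ ℝⁿ, and let Π ∈ ℝ^{k×n} be an (ε/3)-subspace embedding for the column space of the augmented matrix [X,Y]. Let m ∈ ℝᵈ and let S ∈ ℝ^{d×d} be invertible. Define Z = [Xᵀ, Sᵀ]ᵀ, z = [Yᵀ, (Sm)ᵀ]ᵀ, Z' = [(ΠX)ᵀ, Sᵀ]ᵀ, z' = [(ΠY)ᵀ, (Sm)ᵀ]ᵀ. Let μ be a minimizer of β ↦ ‖Zβ − z‖² and μ' a minimizer of β ↦ ‖Z'β − z'‖². Suppose ‖Zμ‖ ≥ ρ‖z‖ for some ρ ∈ (0,1]. Then (‖μ'‖² + trace((Z'ᵀZ')⁻¹))^{1/2} ≤ (1 + (κ(Z)/ρ)·ε) · (‖μ‖² + trace((ZᵀZ)⁻¹))^{1/2}, where κ(Z) = σ_max(Z)/σ_min(Z). Equivalently, the ℓ₂ Wasserstein weight of the Gaussian posterior N(μ', (Z'ᵀZ')⁻¹) is at most (1 + (κ(Z)/ρ)·ε) times that of N(μ, (ZᵀZ)⁻¹). -/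

import Mathlib

open Matrix

noncomputable section

/-- Squared Euclidean norm of a vector. -/
def sqNorm {ι : Type*} [Fintype ι] (v : ι → ℝ) : ℝ := ∑ i, (v i) ^ 2

/-- Euclidean norm of a vector. -/
def eNorm {ι : Type*} [Fintype ι] (v : ι → ℝ) : ℝ := Real.sqrt (sqNorm v)

/-- `P` is an `ε`-subspace embedding for the column space of `A`:
for all `x`, `(1-ε)‖Ax‖² ≤ ‖PAx‖² ≤ (1+ε)‖Ax‖²`. -/
def IsSubspaceEmbedding {K N C : Type*} [Fintype K] [Fintype N] [Fintype C]
    (P : Matrix K N ℝ) (A : Matrix N C ℝ) (ε : ℝ) : Prop :=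
  ∀ x : C → ℝ,
    (1 - ε) * sqNorm (A.mulVec x) ≤ sqNorm ((P * A).mulVec x) ∧
      sqNorm ((P * A).mulVec x) ≤ (1 + ε) * sqNorm (A.mulVec x)

/-- The augmented matrix `[X, Y]` obtained by appending the column `Y` to `X`. -/
def augment {n d : ℕ} (X : Matrix (Fin n) (Fin d) ℝ) (Y : Fin n → ℝ) :
    Matrix (Fin n) (Fin (d + 1)) ℝ :=
  Matrix.of fun i => Fin.snoc (X i) (Y i)

/-- The squared smallest singular value of `M`: `σ_min(M)² = inf_{‖x‖ = 1} ‖Mx‖²`. -/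
def sigMinSq {N C : Type*} [Fintype N] [Fintype C] (M : Matrix N C ℝ) : ℝ :=
  sInf {r : ℝ | ∃ x : C → ℝ, sqNorm x = 1 ∧ r = sqNorm (M.mulVec x)}

/-- The squared largest singular value of `M`: `σ_max(M)² = sup_{‖x‖ = 1} ‖Mx‖²`. -/
def sigMaxSq {N C : Type*} [Fintype N] [Fintype C] (M : Matrix N C ℝ) : ℝ :=
  sSup {r : ℝ | ∃ x : C → ℝ, sqNorm x = 1 ∧ r = sqNorm (M.mulVec x)}

/-- The condition number `κ(M) = σ_max(M) / σ_min(M)`. -/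
def condNum {N C : Type*} [Fintype N] [Fintype C] (M : Matrix N C ℝ) : ℝ :=
  Real.sqrt (sigMaxSq M) / Real.sqrt (sigMinSq M)

/-!
Write `e = μ' - μ`, `r = Xμ - Y` and `δ = ε/3`. Subtracting the normal equations of the two
least-squares problems gives `‖Z'e‖² = ⟨Xe, r⟩ - ⟨ΠXe, Πr⟩`, which polarization of the subspace
embedding bounds by `δ‖Xe‖‖r‖ ≤ δ‖Ze‖‖r‖`; the embedding also gives `(1 - δ)‖Ze‖² ≤ ‖Z'e‖²`.
Hence `‖Ze‖ ≤ δ/(1-δ)·‖r‖ ≤ δ/(1-δ)·‖z‖ ≤ δ/(1-δ)·‖Zμ‖/ρ`, and passing from `Ze`, `Zμ` to `e`, `μ`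
costs the condition number: `‖μ' - μ‖ ≤ c‖μ‖` with `c = δ/(1-δ)·κ(Z)/ρ ≤ κ(Z)ε/ρ`.
For the covariances, `(1 - δ)ZᵀZ ≤ Z'ᵀZ'` in the Loewner order and inversion reverses it, so
`tr (Z'ᵀZ')⁻¹ ≤ (1 - δ)⁻¹ tr (ZᵀZ)⁻¹ ≤ (1 + c)² tr (ZᵀZ)⁻¹`.
-/

section Norms

variable {ι : Type*} [Fintype ι]

lemma sqNorm_nonneg (v : ι → ℝ) : 0 ≤ sqNorm v :=
  Finset.sum_nonneg fun _ _ => sq_nonneg _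

lemma sqNorm_eq_dotProduct (v : ι → ℝ) : sqNorm v = v ⬝ᵥ v := by
  simp [sqNorm, dotProduct, sq]

lemma eNorm_nonneg (v : ι → ℝ) : 0 ≤ eNorm v := Real.sqrt_nonneg _

lemma sq_eNorm (v : ι → ℝ) : eNorm v ^ 2 = sqNorm v := Real.sq_sqrt (sqNorm_nonneg v)

lemma eNorm_eq_norm (v : ι → ℝ) : eNorm v = ‖WithLp.toLp 2 v‖ := by
  simp [eNorm, sqNorm, EuclideanSpace.norm_eq]

lemma eNorm_eq_zero {v : ι → ℝ} : eNorm v = 0 ↔ v = 0 := by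
  simp [eNorm_eq_norm]

lemma eNorm_le_eNorm_add_eNorm_sub (u v : ι → ℝ) : eNorm u ≤ eNorm v + eNorm (u - v) := by
  simpa only [eNorm_eq_norm, WithLp.toLp_sub] using norm_le_norm_add_norm_sub' _ _

lemma sqNorm_smul (c : ℝ) (v : ι → ℝ) : sqNorm (c • v) = c ^ 2 * sqNorm v := by
  simp [sqNorm, Finset.mul_sum, mul_pow]

lemma sqNorm_add (u v : ι → ℝ) : sqNorm (u + v) = sqNorm u + 2 * (u ⬝ᵥ v) + sqNorm v := by
  simp only [sqNorm_eq_dotProduct, add_dotProduct, dotProduct_add, dotProduct_comm v u]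
  ring

lemma sqNorm_sub (u v : ι → ℝ) : sqNorm (u - v) = sqNorm u - 2 * (u ⬝ᵥ v) + sqNorm v := by
  simp only [sqNorm_eq_dotProduct, sub_dotProduct, dotProduct_sub, dotProduct_comm v u]
  ring

lemma sqNorm_sum_elim {κ : Type*} [Fintype κ] (u : ι → ℝ) (v : κ → ℝ) :
    sqNorm (Sum.elim u v) = sqNorm u + sqNorm v := by
  simp [sqNorm, Fintype.sum_sum_type]

end Norms

section LeastSquares

variable {R C : Type*} [Fintype R] [Fintype C]

def IsLeastSquares (M : Matrix R C ℝ) (v : R → ℝ) (c : C → ℝ) : Prop :=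
  ∀ β, sqNorm (M *ᵥ c - v) ≤ sqNorm (M *ᵥ β - v)

lemma eq_zero_of_forall_two_mul_add_sq_nonneg {s q : ℝ}
    (h : ∀ t : ℝ, 0 ≤ 2 * t * s + t ^ 2 * q) : s = 0 := by
  have := discrim_le_zero (a := q) (b := 2 * s) (c := 0) fun t => by linarith [h t]
  rw [discrim] at this
  nlinarith [sq_nonneg s]

lemma IsLeastSquares.dotProduct_eq_zero {M : Matrix R C ℝ} {v : R → ℝ} {c : C → ℝ}
    (h : IsLeastSquares M v c) (w : C → ℝ) : (M *ᵥ w) ⬝ᵥ (M *ᵥ c - v) = 0 := by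
  refine eq_zero_of_forall_two_mul_add_sq_nonneg (q := sqNorm (M *ᵥ w)) fun t => ?_
  have hmin := h (c + t • w)
  rw [mulVec_add, mulVec_smul, add_sub_right_comm, add_comm, sqNorm_add, sqNorm_smul,
    smul_dotProduct, smul_eq_mul] at hmin
  linarith

lemma IsLeastSquares.sqNorm_le {M : Matrix R C ℝ} {v : R → ℝ} {c : C → ℝ}
    (h : IsLeastSquares M v c) : sqNorm (M *ᵥ c - v) ≤ sqNorm v := by
  simpa [sqNorm] using h 0

end LeastSquares

namespace IsSubspaceEmbedding

variable {K N C : Type*} [Fintype K] [Fintype N] [Fintype C]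
  {P : Matrix K N ℝ} {A : Matrix N C ℝ} {δ : ℝ}

lemma one_sub_mul_sqNorm_le (hP : IsSubspaceEmbedding P A δ) (a : C → ℝ) :
    (1 - δ) * sqNorm (A *ᵥ a) ≤ sqNorm (P *ᵥ (A *ᵥ a)) := by
  simpa only [mulVec_mulVec] using (hP a).1

lemma dotProduct_sub_le (hP : IsSubspaceEmbedding P A δ) (a b : C → ℝ) :
    (A *ᵥ a) ⬝ᵥ (A *ᵥ b) - (P *ᵥ (A *ᵥ a)) ⬝ᵥ (P *ᵥ (A *ᵥ b)) ≤
      δ * eNorm (A *ᵥ a) * eNorm (A *ᵥ b) := by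
  set u := A *ᵥ a
  set v := A *ᵥ b
  rcases (eNorm_nonneg u).eq_or_lt with hα | hα
  · rw [← hα]
    simp [eNorm_eq_zero.mp hα.symm]
  rcases (eNorm_nonneg v).eq_or_lt with hβ | hβ
  · rw [← hβ]
    simp [eNorm_eq_zero.mp hβ.symm]
  set α := eNorm u
  set β := eNorm v
  -- Polarize at `βu ± αv`, whose two summands both have length `αβ`.
  have hlow := (hP (β • a + α • b)).1
  have hup := (hP (β • a - α • b)).2
  simp only [← mulVec_mulVec, mulVec_add, mulVec_sub, mulVec_smul, sqNorm_add, sqNorm_sub,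
    sqNorm_smul, smul_dotProduct, dotProduct_smul, smul_eq_mul] at hlow hup
  rw [← sq_eNorm u, ← sq_eNorm v] at hlow hup
  have h4 : 4 * (α * β) * (u ⬝ᵥ v - (P *ᵥ u) ⬝ᵥ (P *ᵥ v)) ≤ 4 * (α * β) * (δ * α * β) := by
    nlinarith
  exact le_of_mul_le_mul_left h4 (by positivity)

end IsSubspaceEmbedding

section SingularValues

variable {N C : Type*} [Fintype N] [Fintype C] (M : Matrix N C ℝ)

lemma sqNorm_mulVec_le_sum_sq_mul (x : C → ℝ) :
    sqNorm (M *ᵥ x) ≤ (∑ i, ∑ j, M i j ^ 2) * sqNorm x := by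
  rw [sqNorm, Finset.sum_mul]
  gcongr with i
  simpa [mulVec, dotProduct, sqNorm] using Finset.sum_mul_sq_le_sq_mul_sq Finset.univ (M i) x

lemma sqNorm_mulVec_div_mem {x : C → ℝ} (hx : sqNorm x ≠ 0) :
    sqNorm (M *ᵥ x) / sqNorm x ∈ {r | ∃ y : C → ℝ, sqNorm y = 1 ∧ r = sqNorm (M *ᵥ y)} := by
  refine ⟨(eNorm x)⁻¹ • x, ?_, ?_⟩ <;>
    simp only [mulVec_smul, sqNorm_smul, inv_pow, sq_eNorm, div_eq_inv_mul, inv_mul_cancel₀ hx]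

lemma bddBelow_sqNorm_mulVec :
    BddBelow {r | ∃ y : C → ℝ, sqNorm y = 1 ∧ r = sqNorm (M *ᵥ y)} :=
  ⟨0, by rintro _ ⟨y, -, rfl⟩; exact sqNorm_nonneg _⟩

lemma bddAbove_sqNorm_mulVec :
    BddAbove {r | ∃ y : C → ℝ, sqNorm y = 1 ∧ r = sqNorm (M *ᵥ y)} :=
  ⟨∑ i, ∑ j, M i j ^ 2, by
    rintro _ ⟨y, hy, rfl⟩
    simpa [hy] using sqNorm_mulVec_le_sum_sq_mul M y⟩

lemma nonempty_sqNorm_mulVec [Nonempty C] :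
    {r | ∃ y : C → ℝ, sqNorm y = 1 ∧ r = sqNorm (M *ᵥ y)}.Nonempty := by
  classical
  exact ⟨_, Pi.single (Classical.arbitrary C) 1, by simp [sqNorm, Pi.single_apply], rfl⟩

lemma sigMinSq_mul_sqNorm_le (x : C → ℝ) : sigMinSq M * sqNorm x ≤ sqNorm (M *ᵥ x) := by
  rcases (sqNorm_nonneg x).eq_or_lt with hx | hx
  · rw [← hx, mul_zero]
    exact sqNorm_nonneg _
  rw [← le_div_iff₀ hx]
  exact csInf_le (bddBelow_sqNorm_mulVec M) (sqNorm_mulVec_div_mem M hx.ne')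

lemma sqNorm_mulVec_le_sigMaxSq_mul (x : C → ℝ) : sqNorm (M *ᵥ x) ≤ sigMaxSq M * sqNorm x := by
  rcases (sqNorm_nonneg x).eq_or_lt with hx | hx
  · have : x = 0 := eNorm_eq_zero.mp (by rw [eNorm, ← hx, Real.sqrt_zero])
    simp [this, sqNorm]
  rw [← div_le_iff₀ hx]
  exact le_csSup (bddAbove_sqNorm_mulVec M) (sqNorm_mulVec_div_mem M hx.ne')

lemma sigMinSq_le_sigMaxSq [Nonempty C] : sigMinSq M ≤ sigMaxSq M :=
  csInf_le_csSup (nonempty_sqNorm_mulVec M) (bddBelow_sqNorm_mulVec M) (bddAbove_sqNorm_mulVec M)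

lemma sigMinSq_pos_of_mul_eq_one [Nonempty C] [DecidableEq C] {L : Matrix C N ℝ}
    (hLM : L * M = 1) : 0 < sigMinSq M := by
  set F := ∑ i, ∑ j, L i j ^ 2
  have hF : ∀ x, sqNorm x ≤ F * sqNorm (M *ᵥ x) := fun x => by
    simpa [mulVec_mulVec, hLM, F] using sqNorm_mulVec_le_sum_sq_mul L (M *ᵥ x)
  obtain ⟨r, y, hy, rfl⟩ := nonempty_sqNorm_mulVec M
  have hFpos : 0 < F := by
    have := hF y
    rw [hy] at this
    nlinarith [sqNorm_nonneg (M *ᵥ y), Finset.sum_nonneg fun i (_ : i ∈ Finset.univ) =>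
      Finset.sum_nonneg fun j (_ : j ∈ Finset.univ) => sq_nonneg (L i j)]
  refine (inv_pos.mpr hFpos).trans_le (le_csInf ⟨_, y, hy, rfl⟩ ?_)
  rintro _ ⟨x, hx, rfl⟩
  rw [inv_le_iff_one_le_mul₀' hFpos, ← hx]
  exact hF x

lemma sqrt_sigMinSq_mul_eNorm_le (x : C → ℝ) :
    √(sigMinSq M) * eNorm x ≤ eNorm (M *ᵥ x) := by
  rw [eNorm, eNorm, ← Real.sqrt_mul' _ (sqNorm_nonneg x)]
  exact Real.sqrt_le_sqrt (sigMinSq_mul_sqNorm_le M x)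

lemma eNorm_mulVec_le_sqrt_sigMaxSq_mul (x : C → ℝ) :
    eNorm (M *ᵥ x) ≤ √(sigMaxSq M) * eNorm x := by
  rw [eNorm, eNorm, ← Real.sqrt_mul' _ (sqNorm_nonneg x)]
  exact Real.sqrt_le_sqrt (sqNorm_mulVec_le_sigMaxSq_mul M x)

lemma one_le_condNum [Nonempty C] (hM : 0 < sigMinSq M) : 1 ≤ condNum M :=
  (one_le_div (Real.sqrt_pos.mpr hM)).mpr (Real.sqrt_le_sqrt (sigMinSq_le_sigMaxSq M))

lemma eNorm_le_mul_condNum_mul (hM : 0 < sigMinSq M) {a : ℝ} (ha : 0 ≤ a) {x y : C → ℝ}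
    (h : eNorm (M *ᵥ x) ≤ a * eNorm (M *ᵥ y)) : eNorm x ≤ a * condNum M * eNorm y := by
  rw [condNum, mul_div_assoc', div_mul_eq_mul_div, le_div_iff₀ (Real.sqrt_pos.mpr hM),
    mul_comm (eNorm x), mul_assoc]
  calc √(sigMinSq M) * eNorm x ≤ eNorm (M *ᵥ x) := sqrt_sigMinSq_mul_eNorm_le M x
    _ ≤ a * eNorm (M *ᵥ y) := h
    _ ≤ a * (√(sigMaxSq M) * eNorm y) := by
      gcongr
      exact eNorm_mulVec_le_sqrt_sigMaxSq_mul M y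

end SingularValues

section GramMatrix

variable {n R R' C : Type*} [Fintype n] [Fintype R] [Fintype R'] [Fintype C]

lemma Matrix.PosSemidef.two_mul_dotProduct_sub_le_inv [DecidableEq n] {Q : Matrix n n ℝ}
    (hQ : Q.PosSemidef) (hQu : IsUnit Q) (x y : n → ℝ) :
    2 * (x ⬝ᵥ y) - y ⬝ᵥ Q *ᵥ y ≤ x ⬝ᵥ Q⁻¹ *ᵥ x := by
  have hdet := (isUnit_iff_isUnit_det Q).mp hQu
  obtain ⟨v, rfl⟩ : ∃ v, Q *ᵥ v = x :=
    ⟨Q⁻¹ *ᵥ x, by rw [mulVec_mulVec, mul_nonsing_inv _ hdet, one_mulVec]⟩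
  have hsymm : ∀ a b, a ⬝ᵥ Q *ᵥ b = b ⬝ᵥ Q *ᵥ a := fun a b => by
    rw [dotProduct_mulVec, ← mulVec_transpose, ← conjTranspose_eq_transpose_of_trivial,
      hQ.isHermitian, dotProduct_comm]
  have hpos := hQ.dotProduct_mulVec_nonneg (y - v)
  rw [star_trivial, mulVec_sub, dotProduct_sub, sub_dotProduct, sub_dotProduct, hsymm v y] at hpos
  rw [mulVec_mulVec, nonsing_inv_mul _ hdet, one_mulVec, dotProduct_comm (Q *ᵥ v),
    dotProduct_comm (Q *ᵥ v)]
  linarith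

lemma Matrix.PosDef.posSemidef_smul_inv_sub_inv [DecidableEq n] {Q₁ Q₂ : Matrix n n ℝ}
    (h₁ : Q₁.PosDef) (h₂ : Q₂.PosDef) {c : ℝ} (hc : 0 < c)
    (h : ∀ y, c * (y ⬝ᵥ Q₁ *ᵥ y) ≤ y ⬝ᵥ Q₂ *ᵥ y) : (c⁻¹ • Q₁⁻¹ - Q₂⁻¹).PosSemidef := by
  refine .of_dotProduct_mulVec_nonneg
    ((h₁.inv.isHermitian.smul (.all _)).sub h₂.inv.isHermitian) fun x => ?_
  set y := Q₂⁻¹ *ᵥ x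
  have hy : Q₂ *ᵥ y = x := by
    rw [mulVec_mulVec, mul_nonsing_inv _ ((isUnit_iff_isUnit_det Q₂).mp h₂.isUnit), one_mulVec]
  -- Test the variational bound for `Q₁⁻¹` at `c • y`.
  have hvar := h₁.posSemidef.two_mul_dotProduct_sub_le_inv h₁.isUnit x (c • y)
  have hcmp := h y
  rw [hy, dotProduct_comm y x] at hcmp
  simp only [dotProduct_smul, mulVec_smul, smul_dotProduct, smul_eq_mul] at hvar
  rw [star_trivial, sub_mulVec, dotProduct_sub, smul_mulVec, dotProduct_smul, smul_eq_mul,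
    sub_nonneg, le_inv_mul_iff₀ hc]
  change c * (x ⬝ᵥ y) ≤ _
  nlinarith

lemma dotProduct_transpose_mul_self_mulVec (M : Matrix R C ℝ) (x : C → ℝ) :
    x ⬝ᵥ (Mᵀ * M) *ᵥ x = sqNorm (M *ᵥ x) := by
  rw [← mulVec_mulVec, dotProduct_mulVec, vecMul_transpose, sqNorm_eq_dotProduct]

lemma posDef_transpose_mul_self {M : Matrix R C ℝ} (hM : Function.Injective M.mulVec) :
    (Mᵀ * M).PosDef := by
  simpa [conjTranspose_eq_transpose_of_trivial] using PosDef.conjTranspose_mul_self M hM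

lemma trace_inv_transpose_mul_self_nonneg [DecidableEq C] (M : Matrix R C ℝ) :
    0 ≤ ((Mᵀ * M)⁻¹).trace := by
  simpa [conjTranspose_eq_transpose_of_trivial] using
    (posSemidef_conjTranspose_mul_self M).inv.trace_nonneg

lemma trace_inv_transpose_mul_self_le [DecidableEq C] {M : Matrix R C ℝ} {M' : Matrix R' C ℝ}
    (hM : Function.Injective M.mulVec) (hM' : Function.Injective M'.mulVec) {c : ℝ} (hc : 0 < c)
    (h : ∀ x, c * sqNorm (M *ᵥ x) ≤ sqNorm (M' *ᵥ x)) :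
    ((M'ᵀ * M')⁻¹).trace ≤ c⁻¹ * ((Mᵀ * M)⁻¹).trace := by
  have hL := (posDef_transpose_mul_self hM).posSemidef_smul_inv_sub_inv
    (posDef_transpose_mul_self hM') hc (by simpa only [dotProduct_transpose_mul_self_mulVec])
  simpa [trace_sub, trace_smul] using hL.trace_nonneg

lemma mulVec_injective_of_mul_eq_one [DecidableEq C] {M : Matrix R C ℝ} {L : Matrix C R ℝ}
    (hLM : L * M = 1) : Function.Injective M.mulVec :=
  fun x y h => by simpa [mulVec_mulVec, hLM] using congrArg (L *ᵥ ·) h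

lemma fromCols_zero_inv_mul_fromRows [DecidableEq C] (A : Matrix R C ℝ) {S : Matrix C C ℝ}
    (hS : IsUnit S.det) : fromCols (0 : Matrix C R ℝ) S⁻¹ * fromRows A S = 1 := by
  rw [fromCols_mul_fromRows, Matrix.zero_mul, zero_add, nonsing_inv_mul _ hS]

end GramMatrix

lemma augment_mulVec_snoc {n d : ℕ} (X : Matrix (Fin n) (Fin d) ℝ) (Y : Fin n → ℝ)
    (u : Fin d → ℝ) (t : ℝ) : augment X Y *ᵥ Fin.snoc u t = X *ᵥ u + t • Y := by
  ext i
  simp [augment, mulVec, dotProduct, Fin.sum_univ_castSucc, mul_comm]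

section SketchedRegression

variable {n d : ℕ} {K R : Type*} [Fintype K] [Fintype R]
  {X : Matrix (Fin n) (Fin d) ℝ} {Y : Fin n → ℝ} {P : Matrix K (Fin n) ℝ}
  {S : Matrix R (Fin d) ℝ} {w : R → ℝ} {δ : ℝ} {μ μ' : Fin d → ℝ}

lemma IsSubspaceEmbedding.one_sub_mul_sqNorm_fromRows_le
    (hP : IsSubspaceEmbedding P (augment X Y) δ) (hδ : 0 ≤ δ) (x : Fin d → ℝ) :
    (1 - δ) * sqNorm (fromRows X S *ᵥ x) ≤ sqNorm (fromRows (P * X) S *ᵥ x) := by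
  have hX := hP.one_sub_mul_sqNorm_le (Fin.snoc x 0)
  simp only [augment_mulVec_snoc, zero_smul, add_zero] at hX
  simp only [fromRows_mulVec, sqNorm_sum_elim, ← mulVec_mulVec]
  nlinarith [sqNorm_nonneg (S *ᵥ x)]

lemma IsLeastSquares.sqNorm_sub_le_of_fromRows
    (hμ : IsLeastSquares (fromRows X S) (Sum.elim Y w) μ) :
    sqNorm (X *ᵥ μ - Y) ≤ sqNorm (Sum.elim Y w) := by
  have := hμ.sqNorm_le
  rw [fromRows_mulVec, ← Sum.elim_sub_sub, sqNorm_sum_elim] at this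
  linarith [sqNorm_nonneg (S *ᵥ μ - w)]

lemma sqNorm_sketched_mulVec_sub_eq (hμ : IsLeastSquares (fromRows X S) (Sum.elim Y w) μ)
    (hμ' : IsLeastSquares (fromRows (P * X) S) (Sum.elim (P *ᵥ Y) w) μ') :
    sqNorm (fromRows (P * X) S *ᵥ (μ' - μ)) =
      (X *ᵥ (μ' - μ)) ⬝ᵥ (X *ᵥ μ - Y) - (P *ᵥ (X *ᵥ (μ' - μ))) ⬝ᵥ (P *ᵥ (X *ᵥ μ - Y)) := by
  have h := hμ.dotProduct_eq_zero (μ' - μ)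
  have h' := hμ'.dotProduct_eq_zero (μ' - μ)
  have hsplit : fromRows (P * X) S *ᵥ μ' - Sum.elim (P *ᵥ Y) w =
      fromRows (P * X) S *ᵥ (μ' - μ) + Sum.elim (P *ᵥ (X *ᵥ μ - Y)) (S *ᵥ μ - w) := by
    ext (i | i) <;> simp [fromRows_mulVec, mulVec_sub, ← mulVec_mulVec]
  rw [hsplit, dotProduct_add, ← sqNorm_eq_dotProduct] at h'
  simp only [fromRows_mulVec, ← Sum.elim_sub_sub, sumElim_dotProduct_sumElim,
    ← mulVec_mulVec, sqNorm_eq_dotProduct] at h h' ⊢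
  linarith

lemma one_sub_mul_eNorm_mulVec_sub_le (hP : IsSubspaceEmbedding P (augment X Y) δ)
    (hδ : 0 ≤ δ) (hμ : IsLeastSquares (fromRows X S) (Sum.elim Y w) μ)
    (hμ' : IsLeastSquares (fromRows (P * X) S) (Sum.elim (P *ᵥ Y) w) μ') :
    (1 - δ) * eNorm (fromRows X S *ᵥ (μ' - μ)) ≤ δ * eNorm (X *ᵥ μ - Y) := by
  set E := eNorm (fromRows X S *ᵥ (μ' - μ))
  have hpolar :=
    hP.dotProduct_sub_le (Fin.snoc (μ' - μ) 0 : Fin (d + 1) → ℝ) (Fin.snoc μ (-1))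
  simp only [augment_mulVec_snoc, zero_smul, add_zero, neg_one_smul, ← sub_eq_add_neg] at hpolar
  have hXE : eNorm (X *ᵥ (μ' - μ)) ≤ E := by
    refine Real.sqrt_le_sqrt ?_
    rw [fromRows_mulVec, sqNorm_sum_elim]
    linarith [sqNorm_nonneg (S *ᵥ (μ' - μ))]
  have hsq : (1 - δ) * E ^ 2 ≤ δ * E * eNorm (X *ᵥ μ - Y) := by
    calc (1 - δ) * E ^ 2 ≤ sqNorm (fromRows (P * X) S *ᵥ (μ' - μ)) := by
          rw [sq_eNorm]; exact hP.one_sub_mul_sqNorm_fromRows_le hδ _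
      _ ≤ δ * eNorm (X *ᵥ (μ' - μ)) * eNorm (X *ᵥ μ - Y) := by
          rw [sqNorm_sketched_mulVec_sub_eq hμ hμ']; exact hpolar
      _ ≤ δ * E * eNorm (X *ᵥ μ - Y) := by gcongr; exact eNorm_nonneg _
  rcases (eNorm_nonneg _ : 0 ≤ E).eq_or_lt with hE | hE
  · rw [show E = 0 from hE.symm, mul_zero]
    exact mul_nonneg hδ (eNorm_nonneg _)
  · exact le_of_mul_le_mul_left (by linarith) hE

lemma eNorm_mulVec_sub_le_of_sketch (hP : IsSubspaceEmbedding P (augment X Y) δ)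
    (hδ₀ : 0 ≤ δ) (hδ₁ : δ < 1) (hμ : IsLeastSquares (fromRows X S) (Sum.elim Y w) μ)
    (hμ' : IsLeastSquares (fromRows (P * X) S) (Sum.elim (P *ᵥ Y) w) μ') :
    eNorm (fromRows X S *ᵥ (μ' - μ)) ≤ δ / (1 - δ) * eNorm (Sum.elim Y w) := by
  rw [div_mul_eq_mul_div, le_div_iff₀ (sub_pos.2 hδ₁), mul_comm]
  calc (1 - δ) * eNorm (fromRows X S *ᵥ (μ' - μ)) ≤ δ * eNorm (X *ᵥ μ - Y) :=
        one_sub_mul_eNorm_mulVec_sub_le hP hδ₀ hμ hμ'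
    _ ≤ δ * eNorm (Sum.elim Y w) := by
        gcongr
        exact Real.sqrt_le_sqrt hμ.sqNorm_sub_le_of_fromRows

lemma eNorm_sub_le_of_sketch (hP : IsSubspaceEmbedding P (augment X Y) δ) (hδ₀ : 0 ≤ δ)
    (hδ₁ : δ < 1) (hσ : 0 < sigMinSq (fromRows X S)) {ρ : ℝ} (hρ : 0 < ρ)
    (hZμ : ρ * eNorm (Sum.elim Y w) ≤ eNorm (fromRows X S *ᵥ μ))
    (hμ : IsLeastSquares (fromRows X S) (Sum.elim Y w) μ)
    (hμ' : IsLeastSquares (fromRows (P * X) S) (Sum.elim (P *ᵥ Y) w) μ') :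
    eNorm (μ' - μ) ≤ condNum (fromRows X S) / ρ * (δ / (1 - δ)) * eNorm μ := by
  have hη : 0 ≤ δ / (1 - δ) := div_nonneg hδ₀ (by linarith)
  rw [show condNum (fromRows X S) / ρ * (δ / (1 - δ)) =
    δ / (1 - δ) / ρ * condNum (fromRows X S) by ring]
  refine eNorm_le_mul_condNum_mul _ hσ (by positivity) ?_
  calc eNorm (fromRows X S *ᵥ (μ' - μ)) ≤ δ / (1 - δ) * eNorm (Sum.elim Y w) :=
        eNorm_mulVec_sub_le_of_sketch hP hδ₀ hδ₁ hμ hμ'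
    _ = δ / (1 - δ) / ρ * (ρ * eNorm (Sum.elim Y w)) := by field_simp
    _ ≤ δ / (1 - δ) / ρ * eNorm (fromRows X S *ᵥ μ) := by gcongr

end SketchedRegression

lemma sqrt_sqNorm_add_le_of_eNorm_sub_le {ι : Type*} [Fintype ι] {μ μ' : ι → ℝ} {t t' c : ℝ}
    (hc : 0 ≤ c) (hμ : eNorm (μ' - μ) ≤ c * eNorm μ) (ht : t' ≤ (1 + c) ^ 2 * t) :
    √(sqNorm μ' + t') ≤ (1 + c) * √(sqNorm μ + t) := by
  have hnorm : eNorm μ' ≤ (1 + c) * eNorm μ := by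
    linarith [eNorm_le_eNorm_add_eNorm_sub μ' μ]
  rw [← Real.sqrt_sq (by positivity : 0 ≤ 1 + c), ← Real.sqrt_mul (by positivity)]
  refine Real.sqrt_le_sqrt ?_
  rw [← sq_eNorm, ← sq_eNorm]
  nlinarith [pow_le_pow_left₀ (eNorm_nonneg μ') hnorm 2]

lemma inv_one_sub_le_one_add_sq {δ a : ℝ} (hδ₀ : 0 ≤ δ) (hδ₁ : δ < 1) (ha : δ / (1 - δ) ≤ a) :
    (1 - δ)⁻¹ ≤ (1 + a) ^ 2 := by
  have h : (1 - δ)⁻¹ = 1 + δ / (1 - δ) := by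
    field_simp [(by linarith : 1 - δ ≠ 0)]
    ring
  have : 0 ≤ δ / (1 - δ) := div_nonneg hδ₀ (by linarith)
  rw [h]
  nlinarith

/-- The `ℓ₂` Wasserstein weight of the sketched Gaussian posterior
`N(μ', (Z'ᵀZ')⁻¹)` is at most `(1 + (κ(Z)/ρ)·ε)` times that of the original posterior
`N(μ, (ZᵀZ)⁻¹)`, where the weight of a Gaussian `N(m, Σ)` equals
`(‖m‖² + trace Σ)^{1/2}`. -/
theorem posterior_wasserstein_weight_bound {n d k : ℕ} {ε : ℝ} (hε : 0 < ε)
    (hε' : ε ≤ 1 / 2)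
    (X : Matrix (Fin n) (Fin d) ℝ) (Y : Fin n → ℝ)
    (P : Matrix (Fin k) (Fin n) ℝ)
    (hP : IsSubspaceEmbedding P (augment X Y) (ε / 3))
    (m : Fin d → ℝ) (S : Matrix (Fin d) (Fin d) ℝ) (hS : IsUnit S.det)
    (Z : Matrix (Fin n ⊕ Fin d) (Fin d) ℝ) (hZ : Z = Matrix.fromRows X S)
    (z : Fin n ⊕ Fin d → ℝ) (hz : z = Sum.elim Y (S.mulVec m))
    (Z' : Matrix (Fin k ⊕ Fin d) (Fin d) ℝ) (hZ' : Z' = Matrix.fromRows (P * X) S)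
    (z' : Fin k ⊕ Fin d → ℝ) (hz' : z' = Sum.elim (P.mulVec Y) (S.mulVec m))
    (μ μ' : Fin d → ℝ)
    (hμ : ∀ β : Fin d → ℝ, sqNorm (Z.mulVec μ - z) ≤ sqNorm (Z.mulVec β - z))
    (hμ' : ∀ β : Fin d → ℝ, sqNorm (Z'.mulVec μ' - z') ≤ sqNorm (Z'.mulVec β - z'))
    (ρ : ℝ) (hρ₀ : 0 < ρ) (hρ₁ : ρ ≤ 1) (hZμ : eNorm (Z.mulVec μ) ≥ ρ * eNorm z) :
    Real.sqrt (sqNorm μ' + ((Z'ᵀ * Z')⁻¹).trace) ≤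
      (1 + condNum Z / ρ * ε) * Real.sqrt (sqNorm μ + ((Zᵀ * Z)⁻¹).trace) := by
  rcases isEmpty_or_nonempty (Fin d) with hd | hd
  · simp [sqNorm, trace]
  subst hZ hz hZ' hz'
  have hδ₀ : 0 ≤ ε / 3 := by positivity
  have hδ₁ : ε / 3 < 1 := by linarith
  have hL := fromCols_zero_inv_mul_fromRows X hS
  have hσ := sigMinSq_pos_of_mul_eq_one _ hL
  set κ := condNum (fromRows X S)
  have hκρ : 1 ≤ κ / ρ := (one_le_div hρ₀).2 (hρ₁.trans (one_le_condNum _ hσ))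
  set η := ε / 3 / (1 - ε / 3)
  have hη : η ≤ ε := by
    rw [div_le_iff₀ (by linarith)]
    nlinarith
  have hmean := eNorm_sub_le_of_sketch hP hδ₀ hδ₁ hσ hρ₀ hZμ hμ hμ'
  have htrace := trace_inv_transpose_mul_self_le (mulVec_injective_of_mul_eq_one hL)
    (mulVec_injective_of_mul_eq_one (fromCols_zero_inv_mul_fromRows (P * X) hS))
    (sub_pos.2 hδ₁) (hP.one_sub_mul_sqNorm_fromRows_le hδ₀)
  calc _ ≤ (1 + κ / ρ * η) * √(sqNorm μ + ((fromRows X S)ᵀ * fromRows X S)⁻¹.trace) := by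
        refine sqrt_sqNorm_add_le_of_eNorm_sub_le (by positivity) hmean (htrace.trans ?_)
        gcongr
        · exact trace_inv_transpose_mul_self_nonneg _
        · exact inv_one_sub_le_one_add_sq hδ₀ hδ₁ (le_mul_of_one_le_left (by positivity) hκρ)
    _ ≤ _ := by gcongr
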